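/- arXiv:1702.02185 — 9 statements merged into one kernel-verified Lean document; each statement's English description precedes it below -/
import Mathlib

section
/- The ideal closure operator C^I is modal (compatible with pullback): for any natural transformation α : F → H of presheaves and any subpresheaf G of H, the preimage under α of the I-closure of G equals the I-closure of the preimage α⁻¹(G), as subpresheaves of F. -/
open CategoryTheory Opposite CategoryTheory.GrothendieckTopology

universe v u

variable {C : Type u} [Category.{v} C]

/-- An ideal of the presheaf category on `C`: a family of sieves `I(X)` such that
`f ∘ g ∈ I(D)` whenever `f : X ⟶ D` and `g ∈ I(X)`. -/
structure CIdeal (C : Type u) [Category.{v} C] where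
  sieve : ∀ X : C, Sieve X
  comp : ∀ ⦃X D : C⦄ (f : X ⟶ D) ⦃Y : C⦄ (g : Y ⟶ X), sieve X g → sieve D (g ≫ f)

/-- `I²(X) = { f ∘ g | f ∈ I(X), g ∈ I(dom f) }`. -/
def CIdeal.sq (I : CIdeal C) (X : C) : ∀ ⦃Y : C⦄, (Y ⟶ X) → Prop :=
  fun _Y h => ∃ (Z : C) (f : Z ⟶ X) (g : _Y ⟶ Z), I.sieve X f ∧ I.sieve Z g ∧ h = g ≫ f

/-- The `I`-closure of a family of subsets of the values of a presheaf `F`. -/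
def CIdeal.cl (I : CIdeal C) (F : Cᵒᵖ ⥤ Type v)
    (G : ∀ X : C, Set (F.obj (op X))) (X : C) : Set (F.obj (op X)) :=
  {x | ∀ ⦃Y : C⦄ (f : Y ⟶ X), I.sieve X f → F.map f.op x ∈ G Y}

/-- the ideal closure operator is modal: for any natural transformation
`α : F ⟶ H` and any subpresheaf `G` of `H`, the preimage under `α` of the `I`-closure
of `G` equals the `I`-closure of the preimage `α⁻¹(G)`, pointwise. -/
theorem cl_modal (I : CIdeal C) (F H : Cᵒᵖ ⥤ Type v) (α : F ⟶ H) (G : Subfunctor H)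
    (X : C) :
    {x : F.obj (op X) | α.app (op X) x ∈ I.cl H (fun Y => G.obj (op Y)) X}
      = I.cl F (fun Y => {x : F.obj (op Y) | α.app (op Y) x ∈ G.obj (op Y)}) X := by
  ext x
  constructor
  · intro hx Y f hf
    have := hx f hf
    simpa [FunctorToTypes.naturality] using this
  · intro hx Y f hf
    have := hx f hf
    simpa [FunctorToTypes.naturality] using this
end

section
/- The ideal closure operator C^I is idempotent (the closure of the closure of every subpresheaf G of every presheaf F equals the closure of G) if and only if the ideal I is idempotent, i.e., I² = I. -/
open CategoryTheory Opposite CategoryTheory.GrothendieckTopology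

universe v u

variable {C : Type u} [Category.{v} C]

namespace CIdeal

variable (I : CIdeal C)

theorem sieve_of_sq {X Y : C} {h : Y ⟶ X} : I.sq X h → I.sieve X h := by
  rintro ⟨Z, f, g, -, hg, rfl⟩
  exact I.comp f g hg

section Closure

variable {F : Cᵒᵖ ⥤ Type v} (G : ∀ X : C, Set (F.obj (op X)))

theorem cl_subset_cl_cl (X : C) : I.cl F G X ⊆ I.cl F (I.cl F G) X := by
  intro x hx Y f hf Z g hg
  simpa using hx (g ≫ f) (I.comp f g hg)

theorem cl_cl_subset_cl (hI : ∀ (X : C) ⦃Y : C⦄ (h : Y ⟶ X), I.sieve X h → I.sq X h)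
    (X : C) : I.cl F (I.cl F G) X ⊆ I.cl F G X := by
  intro x hx Y h hh
  obtain ⟨Z, f, g, hf, hg, rfl⟩ := hI X h hh
  simpa using hx f hf g hg

end Closure

/-- `I²(X)` as a subpresheaf of `yoneda.obj X`. Its double closure always contains `𝟙 X`, while its
single closure contains `𝟙 X` only if `I(X) ⊆ I²(X)`; this detects a failure of idempotence. -/
def sqSubfunctor (X : C) : Subfunctor (yoneda.obj X) where
  obj Y := {u | I.sq X u}
  map := by
    rintro U V i u ⟨Z, f, g, hf, hg, rfl⟩
    exact ⟨Z, f, i.unop ≫ g, hf, (I.sieve Z).downward_closed hg _, by simp⟩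

theorem id_mem_cl_cl_sqSubfunctor (X : C) :
    𝟙 X ∈ I.cl (yoneda.obj X) (I.cl (yoneda.obj X) fun Y => (I.sqSubfunctor X).obj (op Y)) X := by
  intro Y f hf Z g hg
  exact ⟨Y, f, g, hf, hg, by simp⟩

theorem sq_of_id_mem_cl_sqSubfunctor {X : C}
    (hX : 𝟙 X ∈ I.cl (yoneda.obj X) (fun Y => (I.sqSubfunctor X).obj (op Y)) X)
    {Y : C} {h : Y ⟶ X} (hh : I.sieve X h) : I.sq X h := by
  simpa [sqSubfunctor] using hX h hh

end CIdeal

/-- the ideal closure operator is idempotent on all subpresheaves of all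
presheaves if and only if the ideal `I` is idempotent, i.e. `I² = I`. -/
theorem cl_idempotent_iff_ideal_idempotent (I : CIdeal C) :
    (∀ (F : Cᵒᵖ ⥤ Type v) (G : Subfunctor F) (X : C),
        I.cl F (fun Y => I.cl F (fun Z => G.obj (op Z)) Y) X
          = I.cl F (fun Y => G.obj (op Y)) X)
      ↔ (∀ (X : C) ⦃Y : C⦄ (h : Y ⟶ X), I.sq X h ↔ I.sieve X h) := by
  constructor
  · intro hcl X Y h
    have hX := hcl (yoneda.obj X) (I.sqSubfunctor X) X ▸ I.id_mem_cl_cl_sqSubfunctor X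
    exact ⟨I.sieve_of_sq, I.sq_of_id_mem_cl_sqSubfunctor hX⟩
  · intro hI F G X
    exact (I.cl_cl_subset_cl _ (fun X _ h => (hI X h).mpr) X).antisymm (I.cl_subset_cl_cl _ X)
end

section
/- Let C be a small category satisfying the right Ore condition and I an ideal of the presheaf category with I(C) nonempty for each object C. For each object C, each presheaf F, each subpresheaf G ⊆ F, and each x ∈ F(C): (for all h with codomain C there exist g ∈ I(dom h) and k with codomain dom g such that F(h∘g∘k)(x) ∈ G(dom k)) if and only if (there exists w with codomain C such that F(w)(x) ∈ G(dom w)). -/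
open CategoryTheory Opposite CategoryTheory.GrothendieckTopology

universe v u

variable {C : Type u} [Category.{v} C]

/-- The right Ore condition: any cospan can be completed to a commutative square. -/
def RightOre (C : Type u) [Category.{v} C] : Prop :=
  ∀ ⦃A B X : C⦄ (f : A ⟶ X) (g : B ⟶ X), ∃ (D : C) (u : D ⟶ A) (v : D ⟶ B), u ≫ f = v ≫ g

/-- if `C` satisfies the right Ore condition and `I(X) ≠ ∅` for all `X`,
then for every presheaf `F`, subpresheaf `G`, object `X` and `x ∈ F(X)`:
(for all `h` with codomain `X` there are `g ∈ I(dom h)` and `k` with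
`F(h∘g∘k)(x) ∈ G(dom k)`) iff (there is `w` with `F(w)(x) ∈ G(dom w)`). -/
theorem ore_ideal_density_iff (hOre : RightOre C) (I : CIdeal C)
    (hne : ∀ X : C, ∃ (Y : C) (g : Y ⟶ X), I.sieve X g)
    (F : Cᵒᵖ ⥤ Type v) (G : Subfunctor F) (X : C) (x : F.obj (op X)) :
    (∀ ⦃Y : C⦄ (h : Y ⟶ X), ∃ (Z : C) (g : Z ⟶ Y), I.sieve Y g ∧
        ∃ (W : C) (k : W ⟶ Z), F.map (k ≫ g ≫ h).op x ∈ G.obj (op W))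
      ↔ (∃ (W : C) (w : W ⟶ X), F.map w.op x ∈ G.obj (op W)) := by
  constructor
  · intro H
    obtain ⟨Z, g, _, W, k, hk⟩ := H (𝟙 X)
    exact ⟨W, k ≫ g ≫ 𝟙 X, hk⟩
  · rintro ⟨W, w, hw⟩ Y h
    obtain ⟨Z, g, hg⟩ := hne Y
    obtain ⟨D, u, v, huv⟩ := hOre (g ≫ h) w
    refine ⟨Z, g, hg, D, u, ?_⟩
    have : (u ≫ g ≫ h).op = (v ≫ w).op := by rw [huv]
    rw [this, op_comp, F.map_comp]
    exact G.map v.op hw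
end

section
/- Let C be a small category satisfying the right Ore condition and I an ideal of the presheaf category on C with I(C) nonempty for every object C. Then the double negation topology ¬¬ on presheaves on C coincides with the I-double negation operator: for every object C and sieve T on C, ¬¬_C(T) = {f | ∀ g ∈ I(dom f), ∃ h ∈ I(dom g), f∘g∘h ∈ T}, where ¬¬_C(T) = {f | ∀ g with codomain dom f, ∃ h with codomain dom g, f∘g∘h ∈ T}. -/
/-!
The left-hand side says that `T.pullback f` covers `Y` in the dense (¬¬) topology. Under the
right Ore condition the atomic topology, whose covering sieves are the nonempty ones, is
contained in the dense one, so every `I(Y)` is dense: any `g` into `Y` can be precomposed into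
`I(Y)`, which gives `¬¬_I ⊆ ¬¬`. Conversely, as `I` is nonempty and closed under
postcomposition, any witness `h` can be precomposed into an element of `I`.
-/

open CategoryTheory Opposite CategoryTheory.GrothendieckTopology

universe v u

variable {C : Type u} [Category.{v} C]

theorem CategoryTheory.GrothendieckTopology.atomic_le_dense (hro : RightOreCondition C) :
    atomic hro ≤ dense :=
  fun _ _ hS _ f => (atomic hro).pullback_stable f hS

theorem CategoryTheory.Sieve.pullback_mem_dense_iff {X Y : C} (T : Sieve X) (f : Y ⟶ X) :
    T.pullback f ∈ dense Y ↔ ∀ ⦃Z : C⦄ (g : Z ⟶ Y), ∃ (W : C) (h : W ⟶ Z), T (h ≫ g ≫ f) := by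
  simp only [dense_covering, Sieve.pullback_apply, Category.assoc]

namespace CIdeal

def negneg (I : CIdeal C) {X : C} (T : Sieve X) {Y : C} (f : Y ⟶ X) : Prop :=
  ∀ ⦃Z : C⦄ (g : Z ⟶ Y), I.sieve Y g → ∃ (W : C) (h : W ⟶ Z), I.sieve Z h ∧ T (h ≫ g ≫ f)

theorem negneg_of_pullback_mem_dense (I : CIdeal C)
    (hne : ∀ X : C, ∃ (Y : C) (g : Y ⟶ X), I.sieve X g)
    {X : C} (T : Sieve X) {Y : C} (f : Y ⟶ X) (hT : T.pullback f ∈ dense Y) : I.negneg T f := by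
  intro Z g _
  obtain ⟨W, h, hh⟩ := hT g
  obtain ⟨V, k, hk⟩ := hne W
  exact ⟨V, k ≫ h, I.comp h k hk, by simpa using T.downward_closed hh k⟩

theorem pullback_mem_dense_of_negneg (I : CIdeal C) {Y : C} (hI : I.sieve Y ∈ dense Y)
    {X : C} (T : Sieve X) (f : Y ⟶ X) (H : I.negneg T f) : T.pullback f ∈ dense Y := by
  intro Z g
  obtain ⟨D, u, hu⟩ := hI g
  obtain ⟨W, h, -, hT⟩ := H (u ≫ g) hu
  exact ⟨W, h ≫ u, by simpa using hT⟩

end CIdeal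

/-- if `C` satisfies the right Ore condition and `I(X) ≠ ∅` for all `X`,
the double negation topology coincides with the `I`-double negation operator:
`¬¬(T) = { f | ∀ g ∈ I(dom f), ∃ h ∈ I(dom g), f∘g∘h ∈ T }`. -/
theorem negneg_eq_negnegI (hOre : RightOre C) (I : CIdeal C)
    (hne : ∀ X : C, ∃ (Y : C) (g : Y ⟶ X), I.sieve X g)
    (X : C) (T : Sieve X) ⦃Y : C⦄ (f : Y ⟶ X) :
    (∀ ⦃Z : C⦄ (g : Z ⟶ Y), ∃ (W : C) (h : W ⟶ Z), T (h ≫ g ≫ f))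
      ↔ (∀ ⦃Z : C⦄ (g : Z ⟶ Y), I.sieve Y g →
          ∃ (W : C) (h : W ⟶ Z), I.sieve Z h ∧ T (h ≫ g ≫ f)) := by
  have hI : I.sieve Y ∈ dense Y := atomic_le_dense (fun f g => hOre f g) Y (hne Y)
  rw [← T.pullback_mem_dense_iff f]
  exact ⟨I.negneg_of_pullback_mem_dense hne T f, I.pullback_mem_dense_of_negneg hI T f⟩
end

section
/- Let C be a small finitely complete category and I an idempotent ideal of the presheaf category with I(C) nonempty for all C. Then j^I ≤ ¬¬, i.e., for every object C and every sieve S on C, j^I_C(S) ⊆ ¬¬_C(S). -/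
open CategoryTheory Opposite CategoryTheory.GrothendieckTopology

universe v u

variable {C : Type u} [Category.{v} C]

/-- The weak ideal topology: `jᴵ(S) = { f | ∀ g ∈ I(dom f), f ∘ g ∈ S }`. -/
def CIdeal.jI (I : CIdeal C) {X : C} (S : Sieve X) : Sieve X where
  arrows := fun _Y f => ∀ ⦃Z : C⦄ (g : Z ⟶ _Y), I.sieve _Y g → S (g ≫ f)
  downward_closed := by
    intro Y Z f hf g W k hk
    have := hf (k ≫ g) (I.comp g k hk)
    simpa [Category.assoc] using this

theorem jI_le_negneg_general (I : CIdeal C)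
    (hne : ∀ X : C, ∃ (Y : C) (g : Y ⟶ X), I.sieve X g)
    (X : C) (S : Sieve X) ⦃Y : C⦄ (f : Y ⟶ X) (hf : I.jI S f) :
    ∀ ⦃Z : C⦄ (g : Z ⟶ Y), ∃ (W : C) (h : W ⟶ Z), S (h ≫ g ≫ f) := by
  intro Z g
  obtain ⟨W, k, hk⟩ := hne Z
  exact ⟨W, k, (I.jI S).downward_closed hf g k hk⟩

/-- for a finitely complete small category `C` and an idempotent ideal
`I` with all `I(X)` nonempty, `jᴵ ≤ ¬¬`: every arrow in `jᴵ(S)` lies in `¬¬(S)`. -/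
theorem jI_le_negneg [Limits.HasFiniteLimits C] (I : CIdeal C)
    (hidem : ∀ (X : C) ⦃Y : C⦄ (h : Y ⟶ X), I.sq X h ↔ I.sieve X h)
    (hne : ∀ X : C, ∃ (Y : C) (g : Y ⟶ X), I.sieve X g)
    (X : C) (S : Sieve X) ⦃Y : C⦄ (f : Y ⟶ X) (hf : I.jI S f) :
    ∀ ⦃Z : C⦄ (g : Z ⟶ Y), ∃ (W : C) (h : W ⟶ Z), S (h ≫ g ≫ f) :=
  jI_le_negneg_general I hne X S (Y := Y) f hf
end

section
/- Let C be a small finitely complete category with an admissible class M of monomorphisms. The map j_M on the subobject classifier of presheaves on C, given on a sieve S on C by (j_M)_C(S) = {f | ∃ g ∈ M/dom f with f∘g ∈ S}, is a Lawvere–Tierney topology: it preserves the maximal sieve, commutes with binary intersections of sieves, and is idempotent. -/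
/-!
Covering sieves of `Y` are declared to be those containing an arrow of `M`; the identities,
composition and pullback axioms of `M` are exactly the axioms of a Grothendieck topology `J_M`.
Then `j_M` is the `J_M`-closure of sieves, `j_M(S) = { f | f^*S ∈ J_M }`, and every closure
operator of a Grothendieck topology is a Lawvere–Tierney topology.
-/

open CategoryTheory Opposite CategoryTheory.Limits

universe v u

variable {C : Type u} [Category.{v} C] [HasFiniteLimits C]

/-- An admissible class of monomorphisms on a finitely complete category `C`:
contains identities, closed under composition, and stable under pullback. -/
structure AdmissibleClass (C : Type u) [Category.{v} C] [HasFiniteLimits C] where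
  cls : ∀ ⦃Y X : C⦄, (Y ⟶ X) → Prop
  mono : ∀ ⦃Y X : C⦄ (f : Y ⟶ X), cls f → Mono f
  id_mem : ∀ X : C, cls (𝟙 X)
  comp_mem : ∀ ⦃Z Y X : C⦄ (g : Z ⟶ Y) (f : Y ⟶ X), cls g → cls f → cls (g ≫ f)
  pullback_stable : ∀ ⦃A B X : C⦄ (f : A ⟶ X) (m : B ⟶ X), cls m →
    cls (pullback.fst f m)

/-- The diagonal `f × g = f ∘ f⁻¹(g)` of the pullback of `f` and `g` over `X`,
i.e. the product of `f` and `g` in the slice over `X`. -/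
noncomputable def dprod {A B X : C} (f : A ⟶ X) (g : B ⟶ X) : pullback f g ⟶ X :=
  pullback.fst f g ≫ f

/-- The action of an arrow `m : A ⟶ X` on sieves: `S·m = { h | m × h ∈ S }`. -/
noncomputable def sieveAct {X A : C} (S : Sieve X) (m : A ⟶ X) : Sieve X where
  arrows := fun _Y h => S (pullback.fst m h ≫ m)
  downward_closed := by
    intro Y Z h hh g
    have hl : pullback.lift (pullback.fst m (g ≫ h)) (pullback.snd m (g ≫ h) ≫ g)
        (by rw [pullback.condition]; simp) ≫ pullback.fst m h
        = pullback.fst m (g ≫ h) := pullback.lift_fst _ _ _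
    show S (pullback.fst m (g ≫ h) ≫ m)
    rw [← hl, Category.assoc]
    exact S.downward_closed hh _

namespace CategoryTheory

namespace GrothendieckTopology

variable {D : Type*} [Category D] (J : GrothendieckTopology D)

theorem close_top (X : D) : J.close (⊤ : Sieve X) = ⊤ :=
  (J.close_eq_top_iff_mem ⊤).2 (J.top_mem X)

theorem close_inf {X : D} (S T : Sieve X) : J.close (S ⊓ T) = J.close S ⊓ J.close T := by
  ext Y f
  simp only [close_apply, Sieve.inter_apply, covers_iff, Sieve.pullback_inter,
    intersection_covering_iff]

end GrothendieckTopology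

namespace MorphismProperty

variable {D : Type*} [Category D] (P : MorphismProperty D)

/-- Weaker than `IsStableUnderBaseChange`: the completing square need not be a pullback square,
and `P` need not be closed under isomorphisms. -/
class IsStableUnderWeakBaseChange : Prop where
  exists_square : ∀ ⦃Z Y Y' : D⦄ (g : Z ⟶ Y) (h : Y' ⟶ Y), P g →
    ∃ (Z' : D) (g' : Z' ⟶ Y') (k : Z' ⟶ Z), P g' ∧ g' ≫ h = k ≫ g

variable [P.ContainsIdentities] [P.IsStableUnderComposition] [P.IsStableUnderWeakBaseChange]

def containingTopology : GrothendieckTopology D where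
  sieves Y S := ∃ (Z : D) (g : Z ⟶ Y), P g ∧ S g
  top_mem' Y := ⟨Y, 𝟙 Y, P.id_mem Y, trivial⟩
  pullback_stable' := by
    rintro Y Y' S h ⟨Z, g, hg, hS⟩
    obtain ⟨Z', g', k, hg', hsq⟩ := IsStableUnderWeakBaseChange.exists_square g h hg
    exact ⟨Z', g', hg', by simpa only [Sieve.pullback_apply, hsq] using S.downward_closed hS k⟩
  transitive' := by
    rintro Y S ⟨Z, g, hg, hS⟩ R hR
    obtain ⟨W, g', hg', hR'⟩ := hR hS
    exact ⟨W, g' ≫ g, P.comp_mem g' g hg' hg, hR'⟩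

theorem close_containingTopology_apply {X Y : D} (S : Sieve X) (f : Y ⟶ X) :
    P.containingTopology.close S f ↔ ∃ (Z : D) (g : Z ⟶ Y), P g ∧ S (g ≫ f) :=
  Iff.rfl

end MorphismProperty

end CategoryTheory

namespace AdmissibleClass

variable (M : AdmissibleClass C)

def toMorphismProperty : MorphismProperty C := M.cls

instance : M.toMorphismProperty.ContainsIdentities := ⟨M.id_mem⟩

instance : M.toMorphismProperty.IsStableUnderComposition := ⟨fun f g => M.comp_mem f g⟩

instance : M.toMorphismProperty.IsStableUnderWeakBaseChange where
  exists_square _ _ _ g h hg :=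
    ⟨pullback h g, pullback.fst h g, pullback.snd h g, M.pullback_stable h g hg, pullback.condition⟩

end AdmissibleClass

/-- the map `j_M(S) = { f | ∃ g ∈ M/dom f, f∘g ∈ S }` is a well-defined
map of sieves which is a Lawvere–Tierney topology: it preserves the maximal sieve,
commutes with binary intersections, and is idempotent. -/
theorem jM_is_topology (M : AdmissibleClass C) :
    ∃ j : ∀ ⦃X : C⦄, Sieve X → Sieve X,
      (∀ (X : C) (S : Sieve X) ⦃Y : C⦄ (f : Y ⟶ X),
          j S f ↔ ∃ (Z : C) (g : Z ⟶ Y), M.cls g ∧ S (g ≫ f)) ∧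
      (∀ X : C, j (⊤ : Sieve X) = ⊤) ∧
      (∀ (X : C) (S T : Sieve X), j (S ⊓ T) = j S ⊓ j T) ∧
      (∀ (X : C) (S : Sieve X), j (j S) = j S) :=
  let J := M.toMorphismProperty.containingTopology
  ⟨fun _ => J.close, fun _ S _ => M.toMorphismProperty.close_containingTopology_apply S,
    J.close_top, fun _ => J.close_inf, fun _ => J.close_close⟩
end

section
/- Let C be a finitely complete small category with admissible class M. The operation (S, m) ↦ S·m = {h | m × h ∈ S}, where m × h = m ∘ m⁻¹(h) is the product of m and h in the slice over C, defines an action of the commutative monoid M(C) = M/C on the set Ω(C) of sieves on C: S·id_C = S and S·(m·n) = (S·m)·n for all m, n ∈ M/C. -/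
/-!
Whether `S` contains an arrow into `X` only depends on that arrow up to mutual factorization,
and the slice product `dprod` is unital and associative up to such factorizations: `𝟙 × h`
and `h` factor through each other, and so do `(m × n) × h` and `m × (n × h)`, via the
canonical lifts into the iterated pullbacks.
-/

open CategoryTheory Opposite CategoryTheory.Limits

universe v u

variable {C : Type u} [Category.{v} C] [HasFiniteLimits C]

theorem CategoryTheory.Sieve.mem_iff_of_factors {D : Type*} [Category D] {X Y Z : D}
    (S : Sieve X) {f : Y ⟶ X} {g : Z ⟶ X}
    (u : Y ⟶ Z) (hu : u ≫ g = f) (v : Z ⟶ Y) (hv : v ≫ f = g) : S f ↔ S g :=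
  ⟨fun hf => hv ▸ S.downward_closed hf v, fun hg => hu ▸ S.downward_closed hg u⟩

theorem dprod_pullback_condition {A B X : C} (f : A ⟶ X) (g : B ⟶ X) :
    dprod f g = pullback.snd f g ≫ g :=
  pullback.condition

theorem CategoryTheory.Sieve.mem_dprod_id_iff {X Y : C} (S : Sieve X) (h : Y ⟶ X) :
    S (dprod (𝟙 X) h) ↔ S h :=
  S.mem_iff_of_factors (pullback.snd _ _) (dprod_pullback_condition _ _).symm
    (pullback.lift h (𝟙 Y) (by simp))
    (by rw [dprod, pullback.lift_fst_assoc, Category.comp_id])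

theorem CategoryTheory.Sieve.mem_dprod_assoc_iff {X A B Y : C} (S : Sieve X)
    (m : A ⟶ X) (n : B ⟶ X) (h : Y ⟶ X) :
    S (dprod (dprod m n) h) ↔ S (dprod m (dprod n h)) := by
  have hmn : pullback.fst m n ≫ m = pullback.snd m n ≫ n := pullback.condition
  have hnh : pullback.fst n h ≫ n = pullback.snd n h ≫ h := pullback.condition
  -- `unfold` (unlike `simp only`) also removes `dprod` from the `HasPullback` instances.
  unfold dprod
  refine S.mem_iff_of_factors
    (pullback.lift (pullback.fst _ _ ≫ pullback.fst _ _)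
      (pullback.lift (pullback.fst _ _ ≫ pullback.snd _ _) (pullback.snd _ _) ?_) ?_) ?_
    (pullback.lift (pullback.lift (pullback.fst _ _) (pullback.snd _ _ ≫ pullback.fst _ _) ?_)
      (pullback.snd _ _ ≫ pullback.snd _ _) ?_) ?_
  all_goals simp only [Category.assoc, pullback.lift_fst_assoc]
  · exact (pullback.fst _ _ ≫= hmn).symm.trans pullback.condition
  · exact pullback.fst _ _ ≫= hmn
  · exact pullback.condition
  · exact pullback.condition.trans (pullback.snd _ _ ≫= hnh)

theorem sieveAct_id {X : C} (S : Sieve X) : sieveAct S (𝟙 X) = S := by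
  ext Y h
  exact S.mem_dprod_id_iff h

theorem sieveAct_dprod {X A B : C} (S : Sieve X) (m : A ⟶ X) (n : B ⟶ X) :
    sieveAct S (dprod m n) = sieveAct (sieveAct S m) n := by
  ext Y h
  exact S.mem_dprod_assoc_iff m n h

/-- `(S, m) ↦ S·m = sieveAct S m` defines an action of the commutative
monoid `M/X` on the set of sieves on `X`: `S·id = S` and `S·(m·n) = (S·m)·n`,
where `m·n = m ∘ m⁻¹(n)` is the product in the slice. -/
theorem sieveAct_is_action (M : AdmissibleClass C) (X : C) (S : Sieve X) :
    (sieveAct S (𝟙 X) = S) ∧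
    (∀ ⦃A B : C⦄ (m : A ⟶ X) (n : B ⟶ X), M.cls m → M.cls n →
        sieveAct S (dprod m n) = sieveAct (sieveAct S m) n) :=
  ⟨sieveAct_id S, fun _ _ m n _ _ => sieveAct_dprod S m n⟩
end

section
/- Let C be a finitely complete small category with admissible class M. For each object C, the set Ω_{j_M}(C) of j_M-closed sieves, i.e., sieves S on C such that for every f with codomain C, (∃ m ∈ M/dom f with f∘m ∈ S) ⟺ f ∈ S, is closed under the M-action: if S ∈ Ω_{j_M}(C) and f ∈ M/C, then S·f = {h | f × h ∈ S} ∈ Ω_{j_M}(C). -/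
open CategoryTheory Opposite CategoryTheory.Limits

universe v u

variable {C : Type u} [Category.{v} C] [HasFiniteLimits C]

/-- A sieve `S` on `X` is `j_M`-closed if for every `f` with codomain `X`:
`f ∈ S` iff there exists `m ∈ M/dom f` with `f∘m ∈ S`. -/
def jMClosed (M : AdmissibleClass C) {X : C} (S : Sieve X) : Prop :=
  ∀ ⦃Y : C⦄ (f : Y ⟶ X), (∃ (Z : C) (g : Z ⟶ Y), M.cls g ∧ S (g ≫ f)) ↔ S f

/-! If `g ∈ M` and `f × (h ∘ g) ∈ S`, pull `g` back along `f⁻¹(h) → dom h` to an arrow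
`m ∈ M`. Then `(f × h) ∘ m` factors through `f × (h ∘ g)`, so it lies in `S`, and since `S`
is `j_M`-closed, `f × h ∈ S`. -/

theorem sieveAct_apply {X A Y : C} (S : Sieve X) (m : A ⟶ X) (h : Y ⟶ X) :
    sieveAct S m h ↔ S (dprod m h) :=
  Iff.rfl

theorem dprod_comp_eq {A X Y Z : C} (m : A ⟶ X) (h : Y ⟶ X) (g : Z ⟶ Y) :
    (pullbackLeftPullbackSndIso m h g).hom ≫ dprod m (g ≫ h) =
      pullback.fst (pullback.snd m h) g ≫ dprod m h := by
  simp only [dprod, pullbackLeftPullbackSndIso_hom_fst_assoc]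

/-- The direction `f ∈ S → ∃ m, f ∘ m ∈ S` holds for every sieve (take `m = 𝟙`). -/
theorem jMClosed_iff (M : AdmissibleClass C) {X : C} (S : Sieve X) :
    jMClosed M S ↔
      ∀ ⦃Y Z : C⦄ (f : Y ⟶ X) (g : Z ⟶ Y), M.cls g → S (g ≫ f) → S f := by
  constructor
  · intro hS Y Z f g hg hgf
    exact (hS f).mp ⟨Z, g, hg, hgf⟩
  · intro hS Y f
    refine ⟨fun ⟨Z, g, hg, hgf⟩ => hS f g hg hgf, fun hf => ⟨Y, 𝟙 Y, M.id_mem Y, ?_⟩⟩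
    simpa using hf

theorem jMClosed_sieveAct_general (M : AdmissibleClass C) (X : C) (S : Sieve X)
    (hS : jMClosed M S) {A : C} (f : A ⟶ X) :
    jMClosed M (sieveAct S f) := by
  rw [jMClosed_iff] at hS ⊢
  intro Y Z h g hg hgh
  rw [sieveAct_apply] at hgh ⊢
  refine hS (dprod f h) (pullback.fst (pullback.snd f h) g)
    (M.pullback_stable _ _ hg) ?_
  rw [← dprod_comp_eq]
  exact S.downward_closed hgh _

/-- the `j_M`-closed sieves are closed under the `M`-action:
if `S` is `j_M`-closed and `f ∈ M/X` then `S·f` is `j_M`-closed. -/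
theorem jMClosed_sieveAct (M : AdmissibleClass C) (X : C) (S : Sieve X)
    (hS : jMClosed M S) {A : C} (f : A ⟶ X) (hf : M.cls f) :
    jMClosed M (sieveAct S f) :=
  jMClosed_sieveAct_general M X S hS f
end

section
/- Let C be a finitely complete small category with admissible class M. For every object C, every m ∈ M/C, and every sieve S on C, one has ¬¬_C(S·m) ⊆ ¬¬_C(S)·m, where ¬¬_C(S) = {h | ∃ k with codomain dom h such that h∘k ∈ S} is the double negation (atomic) topology and S·m = {h | m × h ∈ S}. Moreover, if in C every composable pair of morphisms forms part of a pullback square (i.e., for every s : D → E and t : E → F there exist morphisms completing s, t to a pullback square with t∘s as one diagonal composite), then ¬¬_C(S·m) = ¬¬_C(S)·m, i.e., ¬¬ is M-action preserving. -/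
open CategoryTheory Opposite CategoryTheory.Limits

universe v u

variable {C : Type u} [Category.{v} C] [HasFiniteLimits C]

/-- The double negation (atomic) topology: `¬¬(S) = { h | ∃ k, h∘k ∈ S }`. -/
noncomputable def negneg {X : C} (S : Sieve X) : Sieve X where
  arrows := fun _Y h => ∃ (W : C) (k : W ⟶ _Y), S (k ≫ h)
  downward_closed := by
    rintro Y Z h ⟨W, k, hk⟩ g
    refine ⟨pullback g k, pullback.fst g k, ?_⟩
    rw [← Category.assoc, pullback.condition, Category.assoc]
    exact S.downward_closed hk _

/-!
For `k : W ⟶ Y`, the pullback of `m` along `k ≫ h` maps into the pullback of `m` along `h`,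
compatibly with the diagonals `m × (k ≫ h)` and `m × h`; this gives `¬¬(S·m) ⊆ ¬¬(S)·m`.
Conversely, let `k : W ⟶ m⁻¹(h)` witness `m × h ∈ ¬¬(S)`. Completing `k` and `m⁻¹(h) ⟶ Y` to a
pullback square `W ⟶ B ⟶ Y`, the diagonal `m × (h₂ ≫ h)` factors through `W`, hence lies in `S`,
so `h₂ : B ⟶ Y` witnesses `h ∈ ¬¬(S·m)`.
-/

section

variable {A X Y W : C} (m : A ⟶ X) (h : Y ⟶ X) (k : W ⟶ Y)

noncomputable def pullbackPrecomp : pullback m (k ≫ h) ⟶ pullback m h :=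
  pullback.lift (pullback.fst _ _) (pullback.snd _ _ ≫ k) <| by
    rw [pullback.condition, Category.assoc]

theorem pullbackPrecomp_snd :
    pullbackPrecomp m h k ≫ pullback.snd m h = pullback.snd m (k ≫ h) ≫ k :=
  pullback.lift_snd _ _ _

theorem pullbackPrecomp_dprod : pullbackPrecomp m h k ≫ dprod m h = dprod m (k ≫ h) :=
  pullback.lift_fst_assoc _ _ _ _

end

theorem negneg_sieveAct_le {X A : C} (S : Sieve X) (m : A ⟶ X) :
    negneg (sieveAct S m) ≤ sieveAct (negneg S) m := by
  rintro Y h ⟨W, k, hk⟩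
  refine ⟨_, pullbackPrecomp m h k, ?_⟩
  change S (_ ≫ dprod m h)
  rwa [pullbackPrecomp_dprod]

theorem sieveAct_of_isPullback {X A Y W B : C} {S : Sieve X} {m : A ⟶ X} {h : Y ⟶ X}
    {k : W ⟶ pullback m h} {k₂ : W ⟶ B} {h₂ : B ⟶ Y}
    (sq : IsPullback k₂ k h₂ (pullback.snd m h)) (hk : S (k ≫ dprod m h)) :
    sieveAct S m (h₂ ≫ h) := by
  have hw := sq.lift_snd _ _ (pullbackPrecomp_snd m h h₂).symm
  change S (dprod m (h₂ ≫ h))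
  rw [← pullbackPrecomp_dprod, ← hw, Category.assoc]
  exact S.downward_closed hk _

theorem sieveAct_negneg_le
    (hC : ∀ ⦃D E F : C⦄ (s : D ⟶ E) (t : E ⟶ F),
      ∃ (B : C) (k : D ⟶ B) (h : B ⟶ F), IsPullback k s h t)
    {X A : C} (S : Sieve X) (m : A ⟶ X) :
    sieveAct (negneg S) m ≤ negneg (sieveAct S m) := by
  rintro Y h ⟨W, k, hk⟩
  obtain ⟨B, k₂, h₂, sq⟩ := hC k (pullback.snd m h)
  exact ⟨B, h₂, sieveAct_of_isPullback sq hk⟩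

/-- `¬¬(S·m) ⊆ ¬¬(S)·m` always; and if every composable pair in `C`
forms part of a pullback square, then `¬¬(S·m) = ¬¬(S)·m`, i.e. `¬¬` is `M`-action
preserving. -/
theorem negneg_action (M : AdmissibleClass C) :
    (∀ (X A : C) (m : A ⟶ X), M.cls m → ∀ S : Sieve X,
        negneg (sieveAct S m) ≤ sieveAct (negneg S) m) ∧
    ((∀ ⦃D E F : C⦄ (s : D ⟶ E) (t : E ⟶ F),
        ∃ (B : C) (k : D ⟶ B) (h : B ⟶ F), IsPullback k s h t) →
      ∀ (X A : C) (m : A ⟶ X), M.cls m → ∀ S : Sieve X,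
        negneg (sieveAct S m) = sieveAct (negneg S) m) :=
  ⟨fun _ _ m _ S => negneg_sieveAct_le S m,
    fun hC _ _ m _ S => le_antisymm (negneg_sieveAct_le S m) (sieveAct_negneg_le hC S m)⟩
end
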